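/- The typed unification algorithm terminates on every input: there is no infinite sequence of rewrite steps starting from any finite set of equations with any flag value. -/
import Mathlib


/-- Base types for constants. -/
inductive Ty : Type
  | int | float | atom | str
  deriving DecidableEq

/-- First-order terms: variables, typed constants, and compound terms. -/
inductive Term : Type
  | var : ℕ → Term
  | const : ℕ → Ty → Term
  | app : ℕ → List Term → Term

mutual
  /-- Application of a substitution to a term. -/
  def subst (θ : ℕ → Term) : Term → Term
    | .var x => θ x
    | .const c τ => .const c τ
    | .app f ts => .app f (substList θ ts)
  /-- Application of a substitution to a list of terms. -/
  def substList (θ : ℕ → Term) : List Term → List Term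
    | [] => []
    | t :: ts => subst θ t :: substList θ ts
end

mutual
  /-- Occurrence of a variable in a term. -/
  def occurs (x : ℕ) : Term → Bool
    | .var y => x == y
    | .const _ _ => false
    | .app _ ts => occursList x ts
  /-- Occurrence of a variable in a list of terms. -/
  def occursList (x : ℕ) : List Term → Bool
    | [] => false
    | t :: ts => occurs x t || occursList x ts
end

/-- Composition of substitutions: (θ ∘ η)(X) = θ(η(X)). -/
def comp (θ η : ℕ → Term) : ℕ → Term := fun x => subst θ (η x)

/-- The substitution binding the single variable x to t. -/
def single (x : ℕ) (t : Term) : ℕ → Term := fun y => if y = x then t else .var y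

/-- θ is a unifier of t₁ and t₂. -/
def IsUnifier (θ : ℕ → Term) (t₁ t₂ : Term) : Prop := subst θ t₁ = subst θ t₂

/-- θ is a most general unifier of t₁ and t₂. -/
def IsMGU (θ : ℕ → Term) (t₁ t₂ : Term) : Prop :=
  IsUnifier θ t₁ t₂ ∧ ∀ η, IsUnifier η t₁ t₂ → ∃ δ, ∀ x, η x = subst δ (θ x)

/-- θ is idempotent. -/
def Idempotent (θ : ℕ → Term) : Prop := ∀ t, subst θ (subst θ t) = subst θ t

/-- Configurations of the typed unification algorithm: a multiset of equations
together with the Boolean flag, or the halting value wrong. -/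
inductive Config : Type
  | state : Multiset (Term × Term) → Bool → Config
  | wrong : Config

/-- Application of a single binding to an equation. -/
def substEq (x : ℕ) (t : Term) (e : Term × Term) : Term × Term :=
  (subst (single x t) e.1, subst (single x t) e.2)

/-- The rewrite rules of the typed unification algorithm. -/
inductive Step : Config → Config → Prop
  | decompose (f : ℕ) (ts ss : List Term) (R : Multiset (Term × Term)) (F : Bool)
      (h : ts.length = ss.length) :
      Step (.state ((Term.app f ts, Term.app f ss) ::ₘ R) F)
           (.state (↑(ts.zip ss) + R) F)
  | clash (f g : ℕ) (ts ss : List Term) (R : Multiset (Term × Term)) (F : Bool)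
      (h : f ≠ g ∨ ts.length ≠ ss.length) :
      Step (.state ((Term.app f ts, Term.app g ss) ::ₘ R) F) .wrong
  | constDel (c : ℕ) (τ : Ty) (R : Multiset (Term × Term)) (F : Bool) :
      Step (.state ((Term.const c τ, Term.const c τ) ::ₘ R) F) (.state R F)
  | constFalse (c d : ℕ) (τ : Ty) (R : Multiset (Term × Term)) (F : Bool) (h : c ≠ d) :
      Step (.state ((Term.const c τ, Term.const d τ) ::ₘ R) F) (.state R false)
  | constWrong (c d : ℕ) (τ σ : Ty) (R : Multiset (Term × Term)) (F : Bool) (h : τ ≠ σ) :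
      Step (.state ((Term.const c τ, Term.const d σ) ::ₘ R) F) .wrong
  | constApp (c : ℕ) (τ : Ty) (f : ℕ) (ts : List Term) (R : Multiset (Term × Term)) (F : Bool) :
      Step (.state ((Term.const c τ, Term.app f ts) ::ₘ R) F) .wrong
  | appConst (c : ℕ) (τ : Ty) (f : ℕ) (ts : List Term) (R : Multiset (Term × Term)) (F : Bool) :
      Step (.state ((Term.app f ts, Term.const c τ) ::ₘ R) F) .wrong
  | varDel (x : ℕ) (R : Multiset (Term × Term)) (F : Bool) :
      Step (.state ((Term.var x, Term.var x) ::ₘ R) F) (.state R F)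
  | orient (x : ℕ) (t : Term) (R : Multiset (Term × Term)) (F : Bool)
      (h : ∀ y, t ≠ Term.var y) :
      Step (.state ((t, Term.var x) ::ₘ R) F) (.state ((Term.var x, t) ::ₘ R) F)
  | eliminate (x : ℕ) (t : Term) (R : Multiset (Term × Term)) (F : Bool)
      (h₁ : occurs x t = false)
      (h₂ : ∃ e ∈ R, occurs x e.1 = true ∨ occurs x e.2 = true) :
      Step (.state ((Term.var x, t) ::ₘ R) F)
           (.state ((Term.var x, t) ::ₘ R.map (substEq x t)) F)
  | occursFail (x : ℕ) (t : Term) (R : Multiset (Term × Term)) (F : Bool)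
      (h₁ : occurs x t = true) (h₂ : t ≠ Term.var x) :
      Step (.state ((Term.var x, t) ::ₘ R) F) (.state R false)

/-- Reachability by rewrite steps. -/
def Reaches : Config → Config → Prop := Relation.ReflTransGen Step

/-- A configuration to which no rule applies. -/
def NormalCfg (c : Config) : Prop := ∀ c', ¬ Step c c'

/-- The typed unification algorithm on input S outputs wrong. -/
def OutputsWrong (S : Multiset (Term × Term)) : Prop :=
  Reaches (Config.state S true) Config.wrong

/-- The typed unification algorithm on input S outputs false. -/
def OutputsFalse (S : Multiset (Term × Term)) : Prop :=
  ∃ S', Reaches (Config.state S true) (Config.state S' false) ∧ NormalCfg (Config.state S' false)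

/-- The typed unification algorithm on input S₀ succeeds with solved set S. -/
def OutputsSet (S₀ S : Multiset (Term × Term)) : Prop :=
  Reaches (Config.state S₀ true) (Config.state S true) ∧ NormalCfg (Config.state S true)

/-! ### Auxiliary development for termination -/

theorem bor_elim {a b : Bool} (h : (a || b) = true) : a = true ∨ b = true := by
  cases a
  · exact Or.inr (by simpa using h)
  · exact Or.inl rfl

theorem btrue_of_not_false {b : Bool} (h : ¬ b = false) : b = true := by
  cases b
  · exact absurd rfl h
  · rfl

mutual
  /-- Size of a term. -/
  def tsize : Term → ℕ
    | .var _ => 1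
    | .const _ _ => 1
    | .app _ ts => 1 + tsizeL ts
  /-- Size of a list of terms. -/
  def tsizeL : List Term → ℕ
    | [] => 0
    | t :: ts => tsize t + tsizeL ts
end

def isVar : Term → Bool
  | .var _ => true
  | _ => false

mutual
  /-- Variables of a term. -/
  def varsT : Term → Finset ℕ
    | .var x => {x}
    | .const _ _ => ∅
    | .app _ ts => varsL ts
  /-- Variables of a list of terms. -/
  def varsL : List Term → Finset ℕ
    | [] => ∅
    | t :: ts => varsT t ∪ varsL ts
end

mutual
  theorem mem_varsT (x : ℕ) : ∀ t : Term, x ∈ varsT t ↔ occurs x t = true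
    | .var y => by
        simp only [varsT, occurs, Finset.mem_singleton, Nat.beq_eq_true_eq]
    | .const c τ => by simp [varsT, occurs]
    | .app f ts => by simpa [varsT, occurs] using mem_varsL x ts
  theorem mem_varsL (x : ℕ) : ∀ l : List Term, x ∈ varsL l ↔ occursList x l = true
    | [] => by simp [varsL, occursList]
    | t :: ts => by
        simp [varsL, occursList, Finset.mem_union, mem_varsT x t, mem_varsL x ts,
          Bool.or_eq_true]
end

mutual
  theorem tsize_pos : ∀ t : Term, 1 ≤ tsize t
    | .var _ => le_refl _
    | .const _ _ => le_refl _
    | .app f ts => by simp [tsize]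
  theorem tsizeL_nonneg : ∀ l : List Term, 0 ≤ tsizeL l
    | _ => Nat.zero_le _
end

theorem occursList_iff (x : ℕ) : ∀ l : List Term,
    occursList x l = true ↔ ∃ t ∈ l, occurs x t = true
  | [] => by simp [occursList]
  | t :: ts => by
      simp [occursList, Bool.or_eq_true, occursList_iff x ts]

mutual
  /-- Substituting `t` (with no `x`) for `x` eliminates `x`. -/
  theorem occ_subst_self (x : ℕ) (t : Term) (hx : occurs x t = false) :
      ∀ u : Term, occurs x (subst (single x t) u) = false
    | .var z => by
        by_cases hz : z = x
        · subst hz; simpa [subst, single] using hx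
        · simp [subst, single, hz, occurs, Nat.beq_eq_true_eq]
          exact fun h => hz h.symm
    | .const c τ => by simp [subst, occurs]
    | .app f ts => by
        simpa [subst, occurs] using occL_subst_self x t hx ts
  theorem occL_subst_self (x : ℕ) (t : Term) (hx : occurs x t = false) :
      ∀ l : List Term, occursList x (substList (single x t) l) = false
    | [] => by simp [substList, occursList]
    | u :: us => by
        simp [substList, occursList, Bool.or_eq_false_iff]
        exact ⟨occ_subst_self x t hx u, occL_subst_self x t hx us⟩
end

mutual
  /-- Occurrences after a single substitution come from old occurrences. -/
  theorem occ_subst (x : ℕ) (t : Term) (y : ℕ) :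
      ∀ u : Term, occurs y (subst (single x t) u) = true →
        occurs y u = true ∨ (occurs x u = true ∧ occurs y t = true)
    | .var z => by
        by_cases hz : z = x
        · subst hz
          intro h
          right
          simpa [subst, single, occurs] using h
        · intro h
          left
          simpa [subst, single, hz] using h
    | .const c τ => by simp [subst, occurs]
    | .app f ts => by
        intro h
        simp only [subst, occurs] at h ⊢
        exact occL_subst x t y ts h
  theorem occL_subst (x : ℕ) (t : Term) (y : ℕ) :
      ∀ l : List Term, occursList y (substList (single x t) l) = true →
        occursList y l = true ∨ (occursList x l = true ∧ occurs y t = true)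
    | [] => by simp [substList, occursList]
    | u :: us => by
        intro h
        simp only [substList, occursList, Bool.or_eq_true] at h ⊢
        rcases h with h | h
        · rcases occ_subst x t y u h with h' | ⟨h1, h2⟩
          · exact Or.inl (Or.inl h')
          · exact Or.inr ⟨Or.inl h1, h2⟩
        · rcases occL_subst x t y us h with h' | ⟨h1, h2⟩
          · exact Or.inl (Or.inr h')
          · exact Or.inr ⟨Or.inr h1, h2⟩
end

mutual
  /-- Old occurrences of `y ≠ x` survive the substitution. -/
  theorem occ_subst_rev (x : ℕ) (t : Term) (y : ℕ) (hyx : y ≠ x) :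
      ∀ u : Term, occurs y u = true → occurs y (subst (single x t) u) = true
    | .var z => by
        intro h
        have hz : y = z := by simpa [occurs, Nat.beq_eq_true_eq] using h
        subst hz
        simp [subst, single, hyx, occurs]
    | .const c τ => by simp [occurs]
    | .app f ts => by
        intro h
        simp only [subst, occurs] at h ⊢
        exact occL_subst_rev x t y hyx ts h
  theorem occL_subst_rev (x : ℕ) (t : Term) (y : ℕ) (hyx : y ≠ x) :
      ∀ l : List Term, occursList y l = true →
        occursList y (substList (single x t) l) = true
    | [] => by simp [occursList]
    | u :: us => by
        intro h
        simp only [substList, occursList, Bool.or_eq_true] at h ⊢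
        rcases h with h | h
        · exact Or.inl (occ_subst_rev x t y hyx u h)
        · exact Or.inr (occL_subst_rev x t y hyx us h)
end

/-- The predicate: `y` occurs in equation `e`. -/
def eqOcc (y : ℕ) (e : Term × Term) : Prop := (occurs y e.1 || occurs y e.2) = true

instance (y : ℕ) : DecidablePred (eqOcc y) := fun e => by unfold eqOcc; infer_instance

/-- Equations of `S` in which `y` occurs. -/
def fV (y : ℕ) (S : Multiset (Term × Term)) : Multiset (Term × Term) :=
  S.filter (eqOcc y)

/-- `y` is solved in `S`. -/
def SolvedVar (y : ℕ) (S : Multiset (Term × Term)) : Prop :=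
  ∃ t, occurs y t = false ∧ fV y S = {(Term.var y, t)}

/-- Variables occurring in `S`. -/
def varsS (S : Multiset (Term × Term)) : Finset ℕ :=
  (S.map fun e => varsT e.1 ∪ varsT e.2).sup

theorem mem_varsS {y : ℕ} {S : Multiset (Term × Term)} :
    y ∈ varsS S ↔ ∃ e ∈ S, eqOcc y e := by
  induction S using Multiset.induction with
  | empty => simp [varsS]
  | cons a s ih =>
      simp only [varsS, Multiset.map_cons, Multiset.sup_cons, Finset.sup_eq_union,
        Finset.mem_union, Multiset.mem_cons] at *
      constructor
      · rintro ((h | h) | h)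
        · refine ⟨a, Or.inl rfl, ?_⟩
          unfold eqOcc
          simp [(mem_varsT y a.1).mp h]
        · refine ⟨a, Or.inl rfl, ?_⟩
          unfold eqOcc
          simp [(mem_varsT y a.2).mp h]
        · obtain ⟨e, he, hocc⟩ := ih.mp h
          exact ⟨e, Or.inr he, hocc⟩
      · rintro ⟨e, (rfl | he), hocc⟩
        · left
          unfold eqOcc at hocc
          rcases bor_elim hocc with h' | h'
          · exact Or.inl ((mem_varsT y e.1).mpr h')
          · exact Or.inr ((mem_varsT y e.2).mpr h')
        · exact Or.inr (ih.mpr ⟨e, he, hocc⟩)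

/-- Unsolved variables of `S`. -/
noncomputable def uns (S : Multiset (Term × Term)) : Finset ℕ :=
  @Finset.filter _ (fun y => ¬ SolvedVar y S) (Classical.decPred _) (varsS S)

/-- Components of the termination measure. -/
noncomputable def n1 (S : Multiset (Term × Term)) : ℕ := (uns S).card
def n2 (S : Multiset (Term × Term)) : ℕ := (S.map fun e => tsize e.1 + tsize e.2).sum
def n3 (S : Multiset (Term × Term)) : ℕ :=
  S.countP (fun e => (isVar e.2 && !isVar e.1) = true)

noncomputable def μ : Config → ℕ × ℕ × ℕ
  | .state S _ => (n1 S, n2 S, n3 S)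
  | .wrong => (0, 0, 0)

def Lex3 : ℕ × ℕ × ℕ → ℕ × ℕ × ℕ → Prop :=
  Prod.Lex (· < ·) (Prod.Lex (· < ·) (· < ·))

theorem lex3_wf : WellFounded Lex3 :=
  WellFounded.prod_lex (wellFounded_lt) (WellFounded.prod_lex wellFounded_lt wellFounded_lt)

theorem lex3_intro {a a' b b' c c' : ℕ} (h1 : a' ≤ a)
    (h2 : a' < a ∨ (b' ≤ b ∧ (b' < b ∨ c' < c))) :
    Lex3 (a', b', c') (a, b, c) := by
  rcases lt_or_eq_of_le h1 with h | rfl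
  · exact Prod.Lex.left _ _ h
  · rcases h2 with h | ⟨hb, h3⟩
    · exact absurd h (lt_irrefl _)
    · rcases lt_or_eq_of_le hb with h | rfl
      · exact Prod.Lex.right _ (Prod.Lex.left _ _ h)
      · rcases h3 with h | h
        · exact absurd h (lt_irrefl _)
        · exact Prod.Lex.right _ (Prod.Lex.right _ h)

theorem n2_cons (e : Term × Term) (R : Multiset (Term × Term)) :
    n2 (e ::ₘ R) = tsize e.1 + tsize e.2 + n2 R := by
  simp [n2]

theorem n2_cons_lt (e : Term × Term) (R : Multiset (Term × Term)) : n2 R < n2 (e ::ₘ R) := by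
  rw [n2_cons]
  have h1 := tsize_pos e.1
  omega

theorem n2_cons_pos (e : Term × Term) (R : Multiset (Term × Term)) : 0 < n2 (e ::ₘ R) := by
  have := n2_cons_lt e R
  omega

theorem n1_le {S S' : Multiset (Term × Term)}
    (hocc : ∀ y, y ∈ varsS S' → y ∈ varsS S)
    (hsol : ∀ y, y ∈ varsS S' → SolvedVar y S → SolvedVar y S') :
    n1 S' ≤ n1 S := by
  apply Finset.card_le_card
  intro y hy
  simp only [uns, Finset.mem_filter] at hy ⊢
  exact ⟨hocc y hy.1, fun hs => hy.2 (hsol y hy.1 hs)⟩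

theorem n1_lt {S S' : Multiset (Term × Term)} (x : ℕ)
    (hocc : ∀ y, y ∈ varsS S' → y ∈ varsS S)
    (hsol : ∀ y, y ≠ x → y ∈ varsS S' → SolvedVar y S → SolvedVar y S')
    (hxS : x ∈ varsS S) (hxU : ¬ SolvedVar x S) (hxS' : SolvedVar x S') :
    n1 S' < n1 S := by
  have hxmem : x ∈ uns S := by simp [uns, Finset.mem_filter, hxS, hxU]
  have hsub : uns S' ⊆ (uns S).erase x := by
    intro y hy
    simp only [uns, Finset.mem_filter] at hy
    have hyx : y ≠ x := by
      rintro rfl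
      exact hy.2 hxS'
    refine Finset.mem_erase.mpr ⟨hyx, ?_⟩
    simp only [uns, Finset.mem_filter]
    exact ⟨hocc y hy.1, fun hs => hy.2 (hsol y hyx hy.1 hs)⟩
  calc n1 S' ≤ ((uns S).erase x).card := Finset.card_le_card hsub
    _ < n1 S := by
        rw [Finset.card_erase_of_mem hxmem]
        have : 0 < (uns S).card := Finset.card_pos.mpr ⟨x, hxmem⟩
        unfold n1
        omega

theorem solved_of_le {y : ℕ} {S S' : Multiset (Term × Term)}
    (h : fV y S' ≤ fV y S) (hy : y ∈ varsS S') (hs : SolvedVar y S) : SolvedVar y S' := by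
  obtain ⟨t, ht, hf⟩ := hs
  obtain ⟨e, heS', heo⟩ := mem_varsS.mp hy
  have he : e ∈ fV y S' := Multiset.mem_filter.mpr ⟨heS', heo⟩
  rw [hf] at h
  rcases Multiset.le_singleton.mp h with h0 | h1
  · rw [h0] at he; simp at he
  · exact ⟨t, ht, h1⟩

theorem fV_cons (y : ℕ) (e : Term × Term) (R : Multiset (Term × Term)) :
    fV y (e ::ₘ R) = (if eqOcc y e then {e} else 0) + fV y R :=
  Multiset.filter_cons _

theorem varsS_cons_le {y : ℕ} {e : Term × Term} {R : Multiset (Term × Term)}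
    (h : y ∈ varsS R) : y ∈ varsS (e ::ₘ R) := by
  obtain ⟨e', he', ho⟩ := mem_varsS.mp h
  exact mem_varsS.mpr ⟨e', Multiset.mem_cons_of_mem he', ho⟩

/-- Removal of one equation does not increase `n1`. -/
theorem n1_remove (e : Term × Term) (R : Multiset (Term × Term)) :
    n1 R ≤ n1 (e ::ₘ R) := by
  apply n1_le
  · exact fun y hy => varsS_cons_le hy
  · intro y hy hs
    refine solved_of_le ?_ hy hs
    exact Multiset.filter_le_filter _ (Multiset.le_cons_self _ _)

theorem zip_size : ∀ ts ss : List Term,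
    ((ts.zip ss).map fun e => tsize e.1 + tsize e.2).sum ≤ tsizeL ts + tsizeL ss
  | [], ss => by simp [List.zip]
  | t :: ts, [] => by simp [List.zip]
  | t :: ts, s :: ss => by
      simp only [List.zip_cons_cons, List.map_cons, List.sum_cons, tsizeL]
      have := zip_size ts ss
      omega

theorem step_decrease {c c' : Config} (h : Step c c') : Lex3 (μ c') (μ c) := by
  cases h with
  | decompose f ts ss R F h =>
      apply lex3_intro
      · -- n1 does not increase
        apply n1_le
        · intro y hy
          obtain ⟨e, he, ho⟩ := mem_varsS.mp hy
          rcases Multiset.mem_add.mp he with he | he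
          · refine mem_varsS.mpr ⟨(Term.app f ts, Term.app f ss), Multiset.mem_cons_self _ _, ?_⟩
            have hmem := List.of_mem_zip (Multiset.mem_coe.mp he)
            unfold eqOcc at ho ⊢
            rcases bor_elim ho with h' | h'
            · have : occursList y ts = true := (occursList_iff y ts).mpr ⟨e.1, hmem.1, h'⟩
              simp [occurs, this]
            · have : occursList y ss = true := (occursList_iff y ss).mpr ⟨e.2, hmem.2, h'⟩
              simp [occurs, this]
          · exact mem_varsS.mpr ⟨e, Multiset.mem_cons_of_mem he, ho⟩
        · intro y hy hs
          obtain ⟨t, ht, hf⟩ := hs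
          -- the head equation does not contain y
          have hhead : ¬ eqOcc y (Term.app f ts, Term.app f ss) := by
            intro hocc
            have : (Term.app f ts, Term.app f ss) ∈ fV y ((Term.app f ts, Term.app f ss) ::ₘ R) :=
              Multiset.mem_filter.mpr ⟨Multiset.mem_cons_self _ _, hocc⟩
            rw [hf] at this
            simp at this
          have hts : occursList y ts = false := by
            by_contra hc
            exact hhead (by unfold eqOcc; simp [occurs, btrue_of_not_false hc])
          have hss : occursList y ss = false := by
            by_contra hc
            exact hhead (by unfold eqOcc; simp [occurs, btrue_of_not_false hc])
          have hzip : fV y (↑(ts.zip ss) : Multiset (Term × Term)) = 0 := by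
            rw [fV, Multiset.filter_eq_nil]
            intro e he hocc
            have hmem := List.of_mem_zip (Multiset.mem_coe.mp he)
            unfold eqOcc at hocc
            rcases bor_elim hocc with h' | h'
            · have := (occursList_iff y ts).mpr ⟨e.1, hmem.1, h'⟩
              rw [hts] at this; exact Bool.noConfusion this
            · have := (occursList_iff y ss).mpr ⟨e.2, hmem.2, h'⟩
              rw [hss] at this; exact Bool.noConfusion this
          refine ⟨t, ht, ?_⟩
          have : fV y ((Term.app f ts, Term.app f ss) ::ₘ R) = fV y R := by
            rw [fV_cons, if_neg hhead, zero_add]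
          rw [fV, Multiset.filter_add]
          rw [fV] at hzip
          rw [hzip, zero_add, ← fV, ← this, hf]
      · -- n2 strictly decreases
        have hn2 : n2 (↑(ts.zip ss) + R) < n2 ((Term.app f ts, Term.app f ss) ::ₘ R) := by
          have h1 : n2 (↑(ts.zip ss) + R)
              = ((ts.zip ss).map fun e => tsize e.1 + tsize e.2).sum + n2 R := by
            simp [n2]
          have h2 : n2 ((Term.app f ts, Term.app f ss) ::ₘ R)
              = (1 + tsizeL ts) + (1 + tsizeL ss) + n2 R := by
            rw [n2_cons]; simp [tsize]
          have hz := zip_size ts ss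
          omega
        exact Or.inr ⟨le_of_lt hn2, Or.inl hn2⟩
  | clash f g ts ss R F h =>
      exact lex3_intro (Nat.zero_le _) (Or.inr ⟨Nat.zero_le _, Or.inl (n2_cons_pos _ _)⟩)
  | constWrong c d τ σ R F h =>
      exact lex3_intro (Nat.zero_le _) (Or.inr ⟨Nat.zero_le _, Or.inl (n2_cons_pos _ _)⟩)
  | constApp c τ f ts R F =>
      exact lex3_intro (Nat.zero_le _) (Or.inr ⟨Nat.zero_le _, Or.inl (n2_cons_pos _ _)⟩)
  | appConst c τ f ts R F =>
      exact lex3_intro (Nat.zero_le _) (Or.inr ⟨Nat.zero_le _, Or.inl (n2_cons_pos _ _)⟩)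
  | constDel c τ R F =>
      exact lex3_intro (n1_remove _ _) (Or.inr ⟨le_of_lt (n2_cons_lt _ _), Or.inl (n2_cons_lt _ _)⟩)
  | constFalse c d τ R F h =>
      exact lex3_intro (n1_remove _ _) (Or.inr ⟨le_of_lt (n2_cons_lt _ _), Or.inl (n2_cons_lt _ _)⟩)
  | varDel x R F =>
      exact lex3_intro (n1_remove _ _) (Or.inr ⟨le_of_lt (n2_cons_lt _ _), Or.inl (n2_cons_lt _ _)⟩)
  | occursFail x t R F h₁ h₂ =>
      exact lex3_intro (n1_remove _ _) (Or.inr ⟨le_of_lt (n2_cons_lt _ _), Or.inl (n2_cons_lt _ _)⟩)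
  | orient x t R F h =>
      have hvt : isVar t = false := by
        cases t with
        | var y => exact absurd rfl (h y)
        | const c τ => rfl
        | app f ts => rfl
      apply lex3_intro
      · -- n1 does not increase
        apply n1_le
        · intro y hy
          obtain ⟨e, he, ho⟩ := mem_varsS.mp hy
          rcases Multiset.mem_cons.mp he with rfl | he
          · refine mem_varsS.mpr ⟨(t, Term.var x), Multiset.mem_cons_self _ _, ?_⟩
            unfold eqOcc at ho ⊢
            simpa [Bool.or_comm] using ho
          · exact mem_varsS.mpr ⟨e, Multiset.mem_cons_of_mem he, ho⟩
        · intro y hy hs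
          obtain ⟨s, hsocc, hf⟩ := hs
          have hhead : ¬ eqOcc y (t, Term.var x) := by
            intro hocc
            have : (t, Term.var x) ∈ fV y ((t, Term.var x) ::ₘ R) :=
              Multiset.mem_filter.mpr ⟨Multiset.mem_cons_self _ _, hocc⟩
            rw [hf] at this
            simp only [Multiset.mem_singleton, Prod.mk.injEq] at this
            exact h y this.1
          have hhead' : ¬ eqOcc y (Term.var x, t) := by
            intro hocc
            apply hhead
            unfold eqOcc at hocc ⊢
            simpa [Bool.or_comm] using hocc
          refine ⟨s, hsocc, ?_⟩
          rw [fV_cons, if_neg hhead']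
          rw [fV_cons, if_neg hhead] at hf
          simpa using hf
      · -- n2 equal, n3 strictly decreases
        refine Or.inr ⟨?_, Or.inr ?_⟩
        · rw [n2_cons, n2_cons]
          simp [add_comm (tsize t)]
        · have hp : (isVar (Term.var x) && !isVar t) = true := by simp [isVar, hvt]
          have hnp : ¬ ((isVar t && !isVar (Term.var x)) = true) := by simp [isVar]
          unfold n3
          rw [Multiset.countP_cons, Multiset.countP_cons]
          simp only [hp, if_pos, if_neg hnp]
          simp
  | eliminate x t R F h₁ h₂ =>
      -- notation
      have hxx : occurs x (Term.var x) = true := by simp [occurs]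
      -- x is in varsS S
      have hxS : x ∈ varsS ((Term.var x, t) ::ₘ R) :=
        mem_varsS.mpr ⟨(Term.var x, t), Multiset.mem_cons_self _ _, by
          unfold eqOcc; simp [hxx]⟩
      -- x is unsolved in S
      have hxU : ¬ SolvedVar x ((Term.var x, t) ::ₘ R) := by
        rintro ⟨s, hs, hf⟩
        obtain ⟨e, heR, heo⟩ := h₂
        have hho : eqOcc x (Term.var x, t) := by unfold eqOcc; simp [hxx]
        rw [fV_cons, if_pos hho] at hf
        have hcard := congrArg Multiset.card hf
        simp only [Multiset.card_add, Multiset.card_singleton] at hcard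
        have : Multiset.card (fV x R) = 0 := by omega
        have hfR : fV x R = 0 := Multiset.card_eq_zero.mp this
        have : e ∈ fV x R := Multiset.mem_filter.mpr ⟨heR, by
          unfold eqOcc
          rcases heo with h' | h' <;> simp [h']⟩
        rw [hfR] at this
        simp at this
      -- x is solved in S'
      have hxS' : SolvedVar x ((Term.var x, t) ::ₘ R.map (substEq x t)) := by
        refine ⟨t, h₁, ?_⟩
        have hho : eqOcc x (Term.var x, t) := by unfold eqOcc; simp [hxx]
        rw [fV_cons, if_pos hho]
        have : fV x (R.map (substEq x t)) = 0 := by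
          rw [fV, Multiset.filter_eq_nil]
          intro e he hocc
          obtain ⟨e₀, _, rfl⟩ := Multiset.mem_map.mp he
          unfold eqOcc at hocc
          unfold substEq at hocc
          rcases bor_elim hocc with h' | h'
          · rw [occ_subst_self x t h₁ e₀.1] at h'; exact Bool.noConfusion h'
          · rw [occ_subst_self x t h₁ e₀.2] at h'; exact Bool.noConfusion h'
        rw [this]
        simp
      have hn1 : n1 ((Term.var x, t) ::ₘ R.map (substEq x t)) < n1 ((Term.var x, t) ::ₘ R) := by
        apply n1_lt x
        · -- occurring variables do not grow
          intro y hy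
          obtain ⟨e, he, ho⟩ := mem_varsS.mp hy
          rcases Multiset.mem_cons.mp he with rfl | he
          · exact mem_varsS.mpr ⟨(Term.var x, t), Multiset.mem_cons_self _ _, ho⟩
          · obtain ⟨e₀, he₀, rfl⟩ := Multiset.mem_map.mp he
            unfold eqOcc substEq at ho
            have hcases : occurs y e₀.1 = true ∨ occurs y e₀.2 = true ∨ occurs y t = true := by
              rcases bor_elim ho with h' | h'
              · rcases occ_subst x t y e₀.1 h' with h'' | ⟨_, h''⟩
                · exact Or.inl h''
                · exact Or.inr (Or.inr h'')
              · rcases occ_subst x t y e₀.2 h' with h'' | ⟨_, h''⟩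
                · exact Or.inr (Or.inl h'')
                · exact Or.inr (Or.inr h'')
            rcases hcases with h' | h' | h'
            · exact mem_varsS.mpr ⟨e₀, Multiset.mem_cons_of_mem he₀, by unfold eqOcc; simp [h']⟩
            · exact mem_varsS.mpr ⟨e₀, Multiset.mem_cons_of_mem he₀, by unfold eqOcc; simp [h']⟩
            · exact mem_varsS.mpr ⟨(Term.var x, t), Multiset.mem_cons_self _ _,
                by unfold eqOcc; simp [h']⟩
        · -- solved variables y ≠ x stay solved
          intro y hyx hy hs
          obtain ⟨s, hys, hf⟩ := hs
          have hyvx : occurs y (Term.var x) = false := by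
            simp [occurs, Nat.beq_eq_true_eq]
            exact fun h => hyx h
          -- y does not occur in t
          have hyt : occurs y t = false := by
            by_contra hc
            have hho : eqOcc y (Term.var x, t) := by
              unfold eqOcc; simp [btrue_of_not_false hc]
            have : (Term.var x, t) ∈ fV y ((Term.var x, t) ::ₘ R) :=
              Multiset.mem_filter.mpr ⟨Multiset.mem_cons_self _ _, hho⟩
            rw [hf] at this
            simp only [Multiset.mem_singleton, Prod.mk.injEq, Term.var.injEq] at this
            exact hyx this.1.symm
          have hhead : ¬ eqOcc y (Term.var x, t) := by
            unfold eqOcc; simp [hyvx, hyt]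
          have hfR : fV y R = {(Term.var y, s)} := by
            rw [fV_cons, if_neg hhead, zero_add] at hf
            exact hf
          -- filtering commutes with the substitution for y
          have hcomm : fV y (R.map (substEq x t)) = (fV y R).map (substEq x t) := by
            rw [fV, Multiset.filter_map]
            congr 1
            apply Multiset.filter_congr
            intro e _
            unfold Function.comp eqOcc substEq
            constructor
            · intro h'
              rcases bor_elim h' with h'' | h''
              · rcases occ_subst x t y e.1 h'' with h3 | ⟨_, h3⟩
                · simp [h3]
                · rw [hyt] at h3; exact Bool.noConfusion h3
              · rcases occ_subst x t y e.2 h'' with h3 | ⟨_, h3⟩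
                · simp [h3]
                · rw [hyt] at h3; exact Bool.noConfusion h3
            · intro h'
              rcases bor_elim h' with h'' | h''
              · simp [occ_subst_rev x t y hyx e.1 h'']
              · simp [occ_subst_rev x t y hyx e.2 h'']
          refine ⟨subst (single x t) s, ?_, ?_⟩
          · by_contra hc
            rcases occ_subst x t y s (btrue_of_not_false hc) with h3 | ⟨_, h3⟩
            · rw [hys] at h3; exact Bool.noConfusion h3
            · rw [hyt] at h3; exact Bool.noConfusion h3
          · rw [fV_cons, if_neg hhead, zero_add, hcomm, hfR]
            have : substEq x t (Term.var y, s) = (Term.var y, subst (single x t) s) := by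
              unfold substEq
              simp [subst, single, hyx]
            simp [this]
        · exact hxS
        · exact hxU
        · exact hxS'
      exact lex3_intro (le_of_lt hn1) (Or.inl hn1)

/-- No infinite descending sequence in a well-founded relation. -/
theorem no_descent {α : Type*} {r : α → α → Prop} (wf : WellFounded r) (g : ℕ → α)
    (h : ∀ n, r (g (n + 1)) (g n)) : False := by
  have key : ∀ a, ∀ n, g n = a → False := by
    intro a
    induction a using WellFounded.induction wf with
    | _ a ih =>
        intro n hn
        exact ih (g (n + 1)) (hn ▸ h n) (n + 1) rfl
  exact key (g 0) 0 rfl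

/-- the typed unification algorithm terminates on every input:
there is no infinite sequence of rewrite steps. -/
theorem typed_unification_terminates :
    ∀ f : ℕ → Config, ¬ ∀ n : ℕ, Step (f n) (f (n + 1)) := by
  intro f hf
  exact no_descent lex3_wf (fun n => μ (f n)) (fun n => step_decrease (hf n))
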